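/- arXiv:2307.12338 — 5 statements merged into one kernel-verified Lean document; each statement's English description precedes it below -/
import Mathlib

section
/- (Lemma 1: nonnegativity of the gift counter in EEFEWP.) Let σ : ℕ → stdSimplex ℝ (Fin m) be the sequence of mixed strategies maintained by the algorithm and c : ℕ → ℝ the sequence of credited round payoffs, and suppose that for every t ≥ 1 the credited payoff dominates the worst case, i.e. c t ≥ wc (σ t). Define the gift counter by k 1 = 0 and k (t+1) = k t + c t − v'. If for every t ≥ 1 either σ t = σ⁰ or wc (σ t) ≥ v' − k t (the strategy played is k t-prime-safe), then k t ≥ 0 for all t ≥ 1. -/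
/-! Each round the counter changes by `c t - v' ≥ wc (σ t) - v'`. Replaying `σ⁰` costs nothing,
since its worst case is `v'` itself, and a `k t`-prime-safe strategy loses at most `k t`;
either way a nonnegative counter stays nonnegative. -/

noncomputable section

variable {m n : ℕ}

/-- Expected payoff to player 1 when player 1 plays mixed strategy `x`
and player 2 plays mixed strategy `y`. -/
def U (A : Fin m → Fin n → ℝ) (x : Fin m → ℝ) (y : Fin n → ℝ) : ℝ :=
  ∑ i, ∑ j, x i * A i j * y j

/-- Payoff of mixed strategy `x` against pure strategy `j` of player 2. -/
def P (A : Fin m → Fin n → ℝ) (x : Fin m → ℝ) (j : Fin n) : ℝ :=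
  ∑ i, x i * A i j

/-- Worst-case value of mixed strategy `x`: the minimum over pure strategies of player 2. -/
def wc [NeZero n] (A : Fin m → Fin n → ℝ) (x : Fin m → ℝ) : ℝ :=
  Finset.univ.inf' Finset.univ_nonempty (P A x)

theorem gift_counter_step_nonneg {k c w v : ℝ} (hk : 0 ≤ k) (hc : w ≤ c)
    (hsafe : w = v ∨ v - k ≤ w) : 0 ≤ k + c - v := by
  rcases hsafe with rfl | hsafe <;> linarith

theorem eefewp_gift_counter_nonneg_general
    [NeZero n] (A : Fin m → Fin n → ℝ)
    (σ0 : Fin m → ℝ)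
    (v' : ℝ) (hv' : v' = wc A σ0)
    (σ : ℕ → (Fin m → ℝ))
    (c : ℕ → ℝ) (hc : ∀ t ≥ 1, c t ≥ wc A (σ t))
    (k : ℕ → ℝ) (hk1 : k 1 = 0)
    (hkrec : ∀ t ≥ 1, k (t + 1) = k t + c t - v')
    (hsafe : ∀ t ≥ 1, σ t = σ0 ∨ wc A (σ t) ≥ v' - k t) :
    ∀ t ≥ 1, k t ≥ 0 := by
  intro t ht
  induction t, ht using Nat.le_induction with
  | base => exact hk1.ge
  | succ t ht ih =>
    rw [hkrec t ht]
    exact gift_counter_step_nonneg ih (hc t ht)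
      ((hsafe t ht).imp (fun hσ0 => by rw [hσ0, hv']) id)

/-- Lemma 1: nonnegativity of the gift counter in EEFEWP. -/
theorem eefewp_gift_counter_nonneg
    [NeZero m] [NeZero n] (A : Fin m → Fin n → ℝ)
    (σ0 : Fin m → ℝ) (hσ0 : σ0 ∈ stdSimplex ℝ (Fin m))
    (v' : ℝ) (hv' : v' = wc A σ0)
    (σ : ℕ → (Fin m → ℝ)) (hσ : ∀ t, σ t ∈ stdSimplex ℝ (Fin m))
    (c : ℕ → ℝ) (hc : ∀ t ≥ 1, c t ≥ wc A (σ t))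
    (k : ℕ → ℝ) (hk1 : k 1 = 0)
    (hkrec : ∀ t ≥ 1, k (t + 1) = k t + c t - v')
    (hsafe : ∀ t ≥ 1, σ t = σ0 ∨ wc A (σ t) ≥ v' - k t) :
    ∀ t ≥ 1, k t ≥ 0 :=
  eefewp_gift_counter_nonneg_general A σ0 v' hv' σ c hc k hk1 hkrec hsafe
end
end

section
/- (Lemma 2: EEFEWP is prime-safe.) Let σ : ℕ → stdSimplex ℝ (Fin m) be the sequence of mixed strategies maintained by the algorithm, y : ℕ → stdSimplex ℝ (Fin n) the (arbitrary, possibly adaptive) sequence of mixed strategies actually played by the opponent, and c : ℕ → ℝ the sequence of credited round payoffs (the payoff of the constrained nemesis), satisfying wc (σ t) ≤ c t ≤ U (σ t) (y t) for every t ≥ 1. Define the gift counter by k 1 = 0 and k (t+1) = k t + c t − v'. If for every t ≥ 1 either σ t = σ⁰ or wc (σ t) ≥ v' − k t, then for every horizon T ≥ 1 the total expected payoff satisfies ∑_{t=1}^{T} U (σ t) (y t) ≥ T * v'. -/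
/-!
The gift counter never becomes negative: in a round with `σ t = σ⁰` the credit is at least
`wc σ⁰ = v'`, and otherwise it is at least `v' - k t`. The credits telescope to
`T * v' + k (T + 1)`, and the actual payoffs dominate the credits.
-/

noncomputable section

variable {m n : ℕ}

open Finset

section Counter

variable {k c : ℕ → ℝ} {v : ℝ}

lemma sum_Icc_eq_of_step (hstep : ∀ t ≥ 1, k (t + 1) = k t + c t - v) (T : ℕ) :
    ∑ t ∈ Icc 1 T, c t = T * v + k (T + 1) - k 1 := by
  induction T with
  | zero => simp
  | succ T ih =>
    rw [sum_Icc_succ_top (by omega), ih, hstep (T + 1) (by omega)]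
    push_cast
    ring

lemma nonneg_of_step (hk1 : k 1 = 0) (hstep : ∀ t ≥ 1, k (t + 1) = k t + c t - v)
    (hc : ∀ t ≥ 1, 0 ≤ k t → v - k t ≤ c t) : ∀ t ≥ 1, 0 ≤ k t := by
  intro t ht
  induction t, ht using Nat.le_induction with
  | base => exact hk1.ge
  | succ t ht ih => linarith [hstep t ht, hc t ht ih]

end Counter

theorem eefewp_prime_safe_general
    [NeZero n] (A : Fin m → Fin n → ℝ)
    (σ0 : Fin m → ℝ)
    (v' : ℝ) (hv' : v' = wc A σ0)
    (σ : ℕ → (Fin m → ℝ))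
    (y : ℕ → (Fin n → ℝ))
    (c : ℕ → ℝ)
    (hc : ∀ t ≥ 1, wc A (σ t) ≤ c t ∧ c t ≤ U A (σ t) (y t))
    (k : ℕ → ℝ) (hk1 : k 1 = 0)
    (hkrec : ∀ t ≥ 1, k (t + 1) = k t + c t - v')
    (hsafe : ∀ t ≥ 1, σ t = σ0 ∨ wc A (σ t) ≥ v' - k t) :
    ∀ T ≥ 1, ∑ t ∈ Finset.Icc 1 T, U A (σ t) (y t) ≥ T * v' := by
  have hcredit : ∀ t ≥ 1, 0 ≤ k t → v' - k t ≤ c t := by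
    intro t ht hkt
    rcases hsafe t ht with hσt | hσt
    · linarith [(hc t ht).1, show wc A (σ t) = v' by rw [hσt, hv']]
    · linarith [(hc t ht).1]
  have hk_nonneg := nonneg_of_step hk1 hkrec hcredit
  intro T _
  calc (T : ℝ) * v' ≤ T * v' + k (T + 1) - k 1 := by linarith [hk_nonneg (T + 1) (by omega)]
    _ = ∑ t ∈ Icc 1 T, c t := (sum_Icc_eq_of_step hkrec T).symm
    _ ≤ ∑ t ∈ Icc 1 T, U A (σ t) (y t) := sum_le_sum fun t ht ↦ (hc t (mem_Icc.mp ht).1).2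

/-- Lemma 2: EEFEWP is prime-safe — the total expected payoff over any horizon `T` is at
least `T * v'`, where `v' = wc σ⁰` is the prime value of the game. -/
theorem eefewp_prime_safe
    [NeZero m] [NeZero n] (A : Fin m → Fin n → ℝ)
    (σ0 : Fin m → ℝ) (hσ0 : σ0 ∈ stdSimplex ℝ (Fin m))
    (v' : ℝ) (hv' : v' = wc A σ0)
    (σ : ℕ → (Fin m → ℝ)) (hσ : ∀ t, σ t ∈ stdSimplex ℝ (Fin m))
    (y : ℕ → (Fin n → ℝ)) (hy : ∀ t, y t ∈ stdSimplex ℝ (Fin n))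
    (c : ℕ → ℝ)
    (hc : ∀ t ≥ 1, wc A (σ t) ≤ c t ∧ c t ≤ U A (σ t) (y t))
    (k : ℕ → ℝ) (hk1 : k 1 = 0)
    (hkrec : ∀ t ≥ 1, k (t + 1) = k t + c t - v')
    (hsafe : ∀ t ≥ 1, σ t = σ0 ∨ wc A (σ t) ≥ v' - k t) :
    ∀ T ≥ 1, ∑ t ∈ Finset.Icc 1 T, U A (σ t) (y t) ≥ T * v' :=
  eefewp_prime_safe_general A σ0 v' hv' σ y c hc k hk1 hkrec hsafe
end
end

section
/- (EEFEWP is β-safe with β the exploitability of the initial strategy.) Let v be the maximin value of the game, v = sSup { wc x | x ∈ stdSimplex ℝ (Fin m) }, and let β = v − wc σ⁰ be the exploitability of σ⁰. Let σ : ℕ → stdSimplex ℝ (Fin m), y : ℕ → stdSimplex ℝ (Fin n), and c : ℕ → ℝ satisfy wc (σ t) ≤ c t ≤ U (σ t) (y t) for every t ≥ 1, define k 1 = 0 and k (t+1) = k t + c t − v', and suppose for every t ≥ 1 either σ t = σ⁰ or wc (σ t) ≥ v' − k t. Then for every horizon T ≥ 1, ∑_{t=1}^{T} U (σ t) (y t)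 ≥ T * (v − β). -/
noncomputable section

variable {m n : ℕ}

/- The running budget `k t` is the payoff collected above the prime value `v'` so far. Playing
`σ⁰` never lowers it, since `c t ≥ wc σ⁰ = v'`; any other strategy risks at most the current
budget. So the budget never goes negative, and the collected payoff is at least `T * v'`, where
`v' = v - β`. -/

section Budget

variable {c k : ℕ → ℝ} {v' : ℝ}

theorem budget_eq_sum_sub (hk1 : k 1 = 0) (hkrec : ∀ t ≥ 1, k (t + 1) = k t + c t - v')
    (T : ℕ) : k (T + 1) = ∑ t ∈ Finset.Icc 1 T, c t - T * v' := by
  induction T with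
  | zero => simpa using hk1
  | succ T ih =>
    rw [hkrec (T + 1) T.succ_pos, ih, Finset.sum_Icc_succ_top (Nat.le_add_left 1 T)]
    push_cast
    ring

theorem budget_nonneg (hk1 : k 1 = 0) (hkrec : ∀ t ≥ 1, k (t + 1) = k t + c t - v')
    (hc : ∀ t ≥ 1, v' ≤ c t ∨ v' - k t ≤ c t) (T : ℕ) : 0 ≤ k (T + 1) := by
  induction T with
  | zero => exact hk1.ge
  | succ T ih =>
    rw [hkrec (T + 1) T.succ_pos]
    rcases hc (T + 1) T.succ_pos with h | h <;> linarith

theorem mul_le_sum_of_budget (hk1 : k 1 = 0) (hkrec : ∀ t ≥ 1, k (t + 1) = k t + c t - v')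
    (hc : ∀ t ≥ 1, v' ≤ c t ∨ v' - k t ≤ c t) (T : ℕ) :
    T * v' ≤ ∑ t ∈ Finset.Icc 1 T, c t := by
  have := budget_nonneg hk1 hkrec hc T
  rw [budget_eq_sum_sub hk1 hkrec] at this
  linarith

end Budget

theorem eefewp_beta_safe_general
    [NeZero m] [NeZero n] (A : Fin m → Fin n → ℝ)
    (σ0 : Fin m → ℝ)
    (v' : ℝ) (hv' : v' = wc A σ0)
    (v : ℝ)
    (β : ℝ) (hβ : β = v - wc A σ0)
    (σ : ℕ → (Fin m → ℝ))
    (y : ℕ → (Fin n → ℝ))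
    (c : ℕ → ℝ)
    (hc : ∀ t ≥ 1, wc A (σ t) ≤ c t ∧ c t ≤ U A (σ t) (y t))
    (k : ℕ → ℝ) (hk1 : k 1 = 0)
    (hkrec : ∀ t ≥ 1, k (t + 1) = k t + c t - v')
    (hsafe : ∀ t ≥ 1, σ t = σ0 ∨ wc A (σ t) ≥ v' - k t) :
    ∀ T ≥ 1, ∑ t ∈ Finset.Icc 1 T, U A (σ t) (y t) ≥ T * (v - β) := by
  intro T _
  have hprime : v - β = v' := by rw [hβ, hv']; ring
  have hbudget : ∀ t ≥ 1, v' ≤ c t ∨ v' - k t ≤ c t := fun t ht ↦ by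
    rcases hsafe t ht with h | h
    · exact Or.inl (hv' ▸ h ▸ (hc t ht).1)
    · exact Or.inr (h.trans (hc t ht).1)
  calc (T : ℝ) * (v - β) = T * v' := by rw [hprime]
    _ ≤ ∑ t ∈ Finset.Icc 1 T, c t := mul_le_sum_of_budget hk1 hkrec hbudget T
    _ ≤ ∑ t ∈ Finset.Icc 1 T, U A (σ t) (y t) :=
      Finset.sum_le_sum fun t ht ↦ (hc t (Finset.mem_Icc.mp ht).1).2

/-- EEFEWP is β-safe, where `β = v − wc σ⁰` is the exploitability of the initial strategy
and `v` is the maximin value of the game. -/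
theorem eefewp_beta_safe
    [NeZero m] [NeZero n] (A : Fin m → Fin n → ℝ)
    (σ0 : Fin m → ℝ) (hσ0 : σ0 ∈ stdSimplex ℝ (Fin m))
    (v' : ℝ) (hv' : v' = wc A σ0)
    (v : ℝ) (hv : v = sSup {z : ℝ | ∃ x ∈ stdSimplex ℝ (Fin m), wc A x = z})
    (β : ℝ) (hβ : β = v - wc A σ0)
    (σ : ℕ → (Fin m → ℝ)) (hσ : ∀ t, σ t ∈ stdSimplex ℝ (Fin m))
    (y : ℕ → (Fin n → ℝ)) (hy : ∀ t, y t ∈ stdSimplex ℝ (Fin n))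
    (c : ℕ → ℝ)
    (hc : ∀ t ≥ 1, wc A (σ t) ≤ c t ∧ c t ≤ U A (σ t) (y t))
    (k : ℕ → ℝ) (hk1 : k 1 = 0)
    (hkrec : ∀ t ≥ 1, k (t + 1) = k t + c t - v')
    (hsafe : ∀ t ≥ 1, σ t = σ0 ∨ wc A (σ t) ≥ v' - k t) :
    ∀ T ≥ 1, ∑ t ∈ Finset.Icc 1 T, U A (σ t) (y t) ≥ T * (v - β) :=
  eefewp_beta_safe_general A σ0 v' hv' v β hβ σ y c hc k hk1 hkrec hsafe
end
end

section
/- (Lemma 3: EEFFE is prime-safe.) Fix a horizon T ≥ 1, a switch time t₀ with 1 ≤ t₀ ≤ T + 1, and a real ε' ≥ 0. Let σ : ℕ → stdSimplex ℝ (Fin m) be the strategies played, y : ℕ → stdSimplex ℝ (Fin n) the opponent's actual mixed strategies, and c : ℕ → ℝ credited round payoffs with wc (σ t) ≤ c t ≤ U (σ t) (y t) for every t ≥ 1; define k 1 = 0 and k (t+1) = k t + c t − v'. Suppose: (i) σ t = σ⁰ for all t < t₀ (the algorithm plays the initial strategy before switching); (ii) if t₀ ≤ T then k t₀ ≥ (T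 − t₀ + 1) * ε' (the accumulated gifts cover the worst-case losses of full exploitation for the remaining rounds); (iii) wc (σ t) ≥ v' − ε' for all t with t₀ ≤ t ≤ T (the exploitative strategy has exploitability at most ε' relative to v'). Then ∑_{t=1}^{T} U (σ t) (y t) ≥ T * v'. -/
noncomputable section

variable {m n : ℕ}

/-!
Telescoping the recurrence gives `∑_{t=1}^{T} c t = T v' + k (T + 1)`, and the credited payoffs
are bounded by the actual ones, so it suffices that `k (T + 1) ≥ 0`. Before the switch every
increment `c t - v'` is at least `wc σ⁰ - v' = 0`, so `k` never drops below `k 1 = 0`; after the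
switch each increment is at least `-ε'`, and the gifts `k t₀` cover the remaining
`T - t₀ + 1` rounds.
-/

open Finset

theorem eq_add_sum_Ico_of_recurrence {k d : ℕ → ℝ} {a b : ℕ}
    (hk : ∀ t ≥ a, k (t + 1) = k t + d t) (hab : a ≤ b) :
    k b = k a + ∑ t ∈ Ico a b, d t := by
  induction b, hab using Nat.le_induction with
  | base => simp
  | succ b hab ih =>
    rw [hk b hab, ih, sum_Ico_succ_top hab, add_assoc]

theorem add_mul_le_of_recurrence {k d : ℕ → ℝ} {a b : ℕ} {L : ℝ}
    (hk : ∀ t ≥ a, k (t + 1) = k t + d t) (hab : a ≤ b) (hd : ∀ t ∈ Ico a b, L ≤ d t) :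
    k a + ((b : ℝ) - a) * L ≤ k b := by
  have hsum : ((b : ℝ) - a) * L ≤ ∑ t ∈ Ico a b, d t := by
    simpa [Nat.cast_sub hab] using card_nsmul_le_sum (Ico a b) d L hd
  rw [eq_add_sum_Ico_of_recurrence hk hab]
  linarith

theorem eeffe_prime_safe_general
    [NeZero n] (A : Fin m → Fin n → ℝ)
    (σ0 : Fin m → ℝ)
    (v' : ℝ) (hv' : v' = wc A σ0)
    (T : ℕ)
    (t₀ : ℕ) (ht₀1 : 1 ≤ t₀)
    (ε' : ℝ)
    (σ : ℕ → (Fin m → ℝ))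
    (y : ℕ → (Fin n → ℝ))
    (c : ℕ → ℝ)
    (hc : ∀ t ≥ 1, wc A (σ t) ≤ c t ∧ c t ≤ U A (σ t) (y t))
    (k : ℕ → ℝ) (hk1 : k 1 = 0)
    (hkrec : ∀ t ≥ 1, k (t + 1) = k t + c t - v')
    (hpre : ∀ t < t₀, σ t = σ0)
    (hswitch : t₀ ≤ T → k t₀ ≥ ((T : ℝ) - t₀ + 1) * ε')
    (hpost : ∀ t, t₀ ≤ t → t ≤ T → wc A (σ t) ≥ v' - ε') :
    ∑ t ∈ Finset.Icc 1 T, U A (σ t) (y t) ≥ T * v' := by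
  have hrec : ∀ t ≥ 1, k (t + 1) = k t + (c t - v') := fun t ht => by
    rw [hkrec t ht, add_sub_assoc]
  have hcU : ∑ t ∈ Icc 1 T, c t ≤ ∑ t ∈ Icc 1 T, U A (σ t) (y t) :=
    sum_le_sum fun t ht => (hc t (mem_Icc.1 ht).1).2
  have hck : ∑ t ∈ Icc 1 T, c t = T * v' + k (T + 1) := by
    rw [eq_add_sum_Ico_of_recurrence hrec (by omega), hk1, ← Ico_add_one_right_eq_Icc,
      sum_sub_distrib]
    simp
  have hk_nonneg : 0 ≤ k (T + 1) := by
    by_cases hswitched : t₀ ≤ T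
    · have hloss := add_mul_le_of_recurrence (L := -ε') (fun t ht => hrec t (ht₀1.trans ht))
        (by omega : t₀ ≤ T + 1) fun t ht => by
          have ht := mem_Ico.1 ht
          linarith [(hc t (by omega)).1, hpost t ht.1 (by omega)]
      push_cast at hloss
      linarith [hswitch hswitched]
    · have hgain := add_mul_le_of_recurrence (L := 0) hrec (by omega : 1 ≤ T + 1) fun t ht => by
        have ht := mem_Ico.1 ht
        have hwc := (hc t ht.1).1
        rw [hpre t (by omega), ← hv'] at hwc
        linarith
      linarith
  linarith

/-- Lemma 3: EEFFE is prime-safe. The algorithm plays the initial strategy `σ⁰` until a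
switch time `t₀`, switching only if the accumulated gifts `k t₀` cover the worst-case
losses `(T − t₀ + 1) * ε'` of full exploitation for the remaining rounds. -/
theorem eeffe_prime_safe
    [NeZero m] [NeZero n] (A : Fin m → Fin n → ℝ)
    (σ0 : Fin m → ℝ) (hσ0 : σ0 ∈ stdSimplex ℝ (Fin m))
    (v' : ℝ) (hv' : v' = wc A σ0)
    (T : ℕ) (hT : 1 ≤ T)
    (t₀ : ℕ) (ht₀1 : 1 ≤ t₀) (ht₀T : t₀ ≤ T + 1)
    (ε' : ℝ) (hε' : 0 ≤ ε')
    (σ : ℕ → (Fin m → ℝ)) (hσ : ∀ t, σ t ∈ stdSimplex ℝ (Fin m))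
    (y : ℕ → (Fin n → ℝ)) (hy : ∀ t, y t ∈ stdSimplex ℝ (Fin n))
    (c : ℕ → ℝ)
    (hc : ∀ t ≥ 1, wc A (σ t) ≤ c t ∧ c t ≤ U A (σ t) (y t))
    (k : ℕ → ℝ) (hk1 : k 1 = 0)
    (hkrec : ∀ t ≥ 1, k (t + 1) = k t + c t - v')
    (hpre : ∀ t < t₀, σ t = σ0)
    (hswitch : t₀ ≤ T → k t₀ ≥ ((T : ℝ) - t₀ + 1) * ε')
    (hpost : ∀ t, t₀ ≤ t → t ≤ T → wc A (σ t) ≥ v' - ε') :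
    ∑ t ∈ Finset.Icc 1 T, U A (σ t) (y t) ≥ T * v' :=
  eeffe_prime_safe_general A σ0 v' hv' T t₀ ht₀1 ε' σ y c hc k hk1 hkrec hpre hswitch hpost
end
end

section
/- (Lemma 4: PRWYWE is prime-safe.) Let σ : ℕ → stdSimplex ℝ (Fin m) be the sequence of mixed strategies maintained by the algorithm, let j : ℕ → Fin n be the opponent's observed pure actions, and let c : ℕ → ℝ be credited round payoffs satisfying wc (σ t) ≤ c t ≤ P (σ t) (j t) for every t ≥ 1 (the payoff of the best response constrained to play the observed action lies between the worst case and the realized expected payoff). Define k 1 = 0 and k (t+1) = k t + c t − v'. If at every round t ≥ 1 the strategy played is k t-prime-safe, i.e. wc (σ t) ≥ v' − k t, then k t ≥ 0 for all t ≥ 1 and, for every horizon T ≥ 1, ∑_{t=1}^{T} P (σ t) (j t) ≥ T * v'. -/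
noncomputable section

variable {m n : ℕ}

theorem sum_Icc_eq_of_succ_eq_add_sub {k c : ℕ → ℝ} {v : ℝ}
    (hrec : ∀ t ≥ 1, k (t + 1) = k t + c t - v) (T : ℕ) :
    ∑ t ∈ Finset.Icc 1 T, c t = k (T + 1) - k 1 + T * v := by
  induction T with
  | zero => simp
  | succ T ih =>
    rw [Finset.sum_Icc_succ_top (by omega), ih, hrec (T + 1) (by omega)]
    push_cast
    ring

theorem nonneg_of_succ_eq_add_sub {k c : ℕ → ℝ} {v : ℝ} (h1 : 0 ≤ k 1)
    (hrec : ∀ t ≥ 1, k (t + 1) = k t + c t - v) (hc : ∀ t ≥ 1, v - k t ≤ c t) :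
    ∀ t ≥ 1, 0 ≤ k t
  | 0, h => absurd h (by omega)
  | 1, _ => h1
  | t + 2, _ => by linarith [hrec (t + 1) (by omega), hc (t + 1) (by omega)]

theorem prwywe_prime_safe_general
    [NeZero n] (A : Fin m → Fin n → ℝ)
    (v' : ℝ)
    (σ : ℕ → (Fin m → ℝ))
    (j : ℕ → Fin n)
    (c : ℕ → ℝ)
    (hc : ∀ t ≥ 1, wc A (σ t) ≤ c t ∧ c t ≤ P A (σ t) (j t))
    (k : ℕ → ℝ) (hk1 : k 1 = 0)
    (hkrec : ∀ t ≥ 1, k (t + 1) = k t + c t - v')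
    (hsafe : ∀ t ≥ 1, wc A (σ t) ≥ v' - k t) :
    (∀ t ≥ 1, k t ≥ 0) ∧
      ∀ T ≥ 1, ∑ t ∈ Finset.Icc 1 T, P A (σ t) (j t) ≥ T * v' := by
  have hk_nonneg : ∀ t ≥ 1, 0 ≤ k t :=
    nonneg_of_succ_eq_add_sub hk1.ge hkrec fun t ht => (hsafe t ht).trans (hc t ht).1
  refine ⟨hk_nonneg, fun T _ => ?_⟩
  calc (T : ℝ) * v' ≤ k (T + 1) - k 1 + T * v' := by linarith [hk_nonneg (T + 1) (by omega)]
    _ = ∑ t ∈ Finset.Icc 1 T, c t := (sum_Icc_eq_of_succ_eq_add_sub hkrec T).symm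
    _ ≤ ∑ t ∈ Finset.Icc 1 T, P A (σ t) (j t) :=
      Finset.sum_le_sum fun t ht => (hc t (Finset.mem_Icc.mp ht).1).2

/-- Lemma 4: PRWYWE is prime-safe. If at every round the strategy played is
`k t`-prime-safe, then the gift counter is nonnegative and the total expected payoff over
any horizon `T` is at least `T * v'`. -/
theorem prwywe_prime_safe
    [NeZero m] [NeZero n] (A : Fin m → Fin n → ℝ)
    (σ0 : Fin m → ℝ) (hσ0 : σ0 ∈ stdSimplex ℝ (Fin m))
    (v' : ℝ) (hv' : v' = wc A σ0)
    (σ : ℕ → (Fin m → ℝ)) (hσ : ∀ t, σ t ∈ stdSimplex ℝ (Fin m))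
    (j : ℕ → Fin n)
    (c : ℕ → ℝ)
    (hc : ∀ t ≥ 1, wc A (σ t) ≤ c t ∧ c t ≤ P A (σ t) (j t))
    (k : ℕ → ℝ) (hk1 : k 1 = 0)
    (hkrec : ∀ t ≥ 1, k (t + 1) = k t + c t - v')
    (hsafe : ∀ t ≥ 1, wc A (σ t) ≥ v' - k t) :
    (∀ t ≥ 1, k t ≥ 0) ∧
      ∀ T ≥ 1, ∑ t ∈ Finset.Icc 1 T, P A (σ t) (j t) ≥ T * v' :=
  prwywe_prime_safe_general A v' σ j c hc k hk1 hkrec hsafe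
end
end
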